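/- Assume |X_i| < add(d⁰(V)) for all i. For every k ∈ ω, every trimmed tree T ∈ V, and every Y ∈ d⁰(V), there exists a trimmed tree P ∈ V with [P] ⊆ [T], [P] ∩ Y = ∅, and the first k+1 elements of the splitting set of P coincide with the first k+1 elements of the splitting set of T. -/

import Mathlib

open Set Cardinal

/-- The set of branches of the trimmed tree `T[A,α]`:
all `β` agreeing with `α` outside of `A`. -/
def branches (X : ℕ → Type) (A : Set ℕ) (α : ∀ i, X i) : Set (∀ i, X i) :=
  {β | ∀ n ∉ A, β n = α n}

/-- The family `V` of branch sets of trimmed trees. -/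
def treeV (X : ℕ → Type) : Set (Set (∀ i, X i)) :=
  {S | ∃ A α, A.Infinite ∧ S = branches X A α}

/-- `[T]*`: all `β` agreeing with `α` outside of `A`, up to finitely many exceptions. -/
def starBranches (X : ℕ → Type) (A : Set ℕ) (α : ∀ i, X i) : Set (∀ i, X i) :=
  {β | {n | n ∉ A ∧ β n ≠ α n}.Finite}

/-- The family `V*`. -/
def treeVstar (X : ℕ → Type) : Set (Set (∀ i, X i)) :=
  {S | ∃ A α, A.Infinite ∧ S = starBranches X A α}

/-- The ideal `d⁰(F)`. -/
def d0 {X : ℕ → Type} (F : Set (Set (∀ i, X i))) : Set (Set (∀ i, X i)) :=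
  {Y | ∀ W ∈ F, ∃ U ∈ F, U ⊆ W ∧ U ∩ Y = ∅}

/-- `α_s`: overwrite `α` by `s` on `{0,…,n-1}`. -/
def modifySeq (X : ℕ → Type) (n : ℕ) (s α : ∀ i, X i) : ∀ i, X i :=
  fun i => if i < n then s i else α i

/-- `add(d⁰(V))`: the least cardinality of a subfamily of `d⁰(V)` whose union
is not in `d⁰(V)`. -/
noncomputable def addd0 (X : ℕ → Type) : Cardinal :=
  sInf {c | ∃ G : Set (Set (∀ i, X i)), G ⊆ d0 (treeV X) ∧ ⋃₀ G ∉ d0 (treeV X) ∧ c = #G}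

/-!
Let `m` exceed the `k`-th splitting level of `T = T[A, α]`. Changing the first `m` coordinates is
a symmetry of `V` and `d⁰(V)`, and there are only `∏_{i<m} |X_i| < add(d⁰(V))` ways to do it, so
the set `Z` of sequences with some prefix change landing in `Y` is still in `d⁰(V)`. Pick
`T[D, δ] ⊆ T[A ∖ m, α]` missing `Z`; putting back the splitting levels `A ∩ m` gives the required
tree, since any of its branches agrees with a branch of `T[D, δ]` from `m` on.
-/

namespace Cardinal

theorem mk_pi_fin_lt {κ : Cardinal} (hκ : ℵ₀ ≤ κ) :
    ∀ {m : ℕ} (f : Fin m → Type), (∀ i, #(f i) < κ) → #(∀ i, f i) < κ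
  | 0, f, _ => by
    rw [mk_eq_one]
    exact one_lt_aleph0.trans_le hκ
  | m + 1, f, hf => by
    rw [← mk_congr (Fin.consEquiv f), mk_prod, lift_id, lift_id]
    exact mul_lt_of_lt hκ (hf 0) (mk_pi_fin_lt hκ _ fun i => hf i.succ)

end Cardinal

namespace Nat

theorem count_congr_of_forall_lt {p q : ℕ → Prop} [DecidablePred p] [DecidablePred q] {n : ℕ}
    (hpq : ∀ i < n, p i ↔ q i) : count p n = count q n := by
  rw [count_eq_card_filter_range, count_eq_card_filter_range]
  exact congrArg Finset.card <| Finset.filter_congr fun i hi => hpq i (Finset.mem_range.1 hi)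

theorem nth_eq_nth_of_forall_lt {p q : ℕ → Prop} [DecidablePred p] [DecidablePred q] {m j : ℕ}
    (hp : (Set.ofPred p).Infinite) (hpq : ∀ i < m, p i ↔ q i) (hj : nth p j < m) :
    nth q j = nth p j := by
  have hcount : count q (nth p j) = j := by
    rw [← count_congr_of_forall_lt fun i hi => hpq i (hi.trans hj), count_nth_of_infinite hp]
  conv_lhs => rw [← hcount]
  exact nth_count ((hpq _ hj).1 (nth_mem_of_infinite hp j))

end Nat

section Ideal

variable {X : ℕ → Type}

theorem empty_mem_d0 (F : Set (Set (∀ i, X i))) : ∅ ∈ d0 F :=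
  fun W hW => ⟨W, hW, subset_rfl, inter_empty W⟩

theorem union_mem_d0 {F : Set (Set (∀ i, X i))} {Y Z : Set (∀ i, X i)}
    (hY : Y ∈ d0 F) (hZ : Z ∈ d0 F) : Y ∪ Z ∈ d0 F := by
  intro W hW
  obtain ⟨U, hU, hUW, hUY⟩ := hY W hW
  obtain ⟨U', hU', hU'U, hU'Z⟩ := hZ U hU
  refine ⟨U', hU', hU'U.trans hUW, ?_⟩
  rw [inter_union_distrib_left, hU'Z, union_empty]
  exact subset_empty_iff.1 (hUY ▸ inter_subset_inter_left Y hU'U)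

theorem sUnion_mem_d0_of_finite {F : Set (Set (∀ i, X i))} {G : Set (Set (∀ i, X i))}
    (hG : G.Finite) : G ⊆ d0 F → ⋃₀ G ∈ d0 F := by
  induction G, hG using Set.Finite.induction_on with
  | empty => simpa using empty_mem_d0 F
  | @insert Z G _ _ ih =>
    intro h
    rw [sUnion_insert]
    exact union_mem_d0 (h (mem_insert Z G)) (ih ((subset_insert Z G).trans h))

end Ideal

section Branches

variable {X : ℕ → Type}

theorem mem_branches_self (A : Set ℕ) (α : ∀ i, X i) : α ∈ branches X A α :=
  fun _ _ => rfl

theorem branches_subset_branches_iff [∀ i, Nontrivial (X i)] {A B : Set ℕ} {α β : ∀ i, X i} :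
    branches X B β ⊆ branches X A α ↔ B ⊆ A ∧ ∀ n ∉ A, β n = α n := by
  refine ⟨fun h => ⟨fun n hnB => ?_, h (mem_branches_self B β)⟩, ?_⟩
  · by_contra hnA
    obtain ⟨y, hy⟩ := exists_ne (β n)
    have hupdate : Function.update β n y ∈ branches X B β := fun i hi => by
      rw [Function.update_of_ne (ne_of_mem_of_not_mem hnB hi).symm]
    have := (h hupdate n hnA).trans (h (mem_branches_self B β) n hnA).symm
    exact hy (by simpa using this)
  · rintro ⟨hBA, hβα⟩ γ hγ n hnA
    exact (hγ n fun hnB => hnA (hBA hnB)).trans (hβα n hnA)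

theorem modifySeq_preimage_mem_d0 [∀ i, Nontrivial (X i)] (m : ℕ) (s : ∀ i, X i)
    {Y : Set (∀ i, X i)} (hY : Y ∈ d0 (treeV X)) : modifySeq X m s ⁻¹' Y ∈ d0 (treeV X) := by
  rintro _ ⟨C, γ, hC, rfl⟩
  -- shrink the copy of `T[C, γ]` with prefix `s` (levels below `m` frozen), then put `γ`'s prefix back
  obtain ⟨_, ⟨D, δ, hD, rfl⟩, hsub, hdisj⟩ :=
    hY (branches X (C \ Iio m) (modifySeq X m s γ)) ⟨_, _, hC.sdiff (finite_Iio m), rfl⟩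
  obtain ⟨hDC, hδ⟩ := branches_subset_branches_iff.1 hsub
  refine ⟨branches X D (modifySeq X m γ δ), ⟨D, _, hD, rfl⟩,
    branches_subset_branches_iff.2 ⟨fun n hn => (hDC hn).1, fun n hnC => ?_⟩, ?_⟩
  · by_cases hnm : n < m
    · simp [modifySeq, hnm]
    · simpa [modifySeq, hnm] using hδ n fun h => hnC h.1
  · refine eq_empty_of_forall_notMem fun β ⟨hβ, hβY⟩ => hdisj.subset ⟨?_, hβY⟩
    intro n hnD
    by_cases hnm : n < m
    · simpa [modifySeq, hnm] using (hδ n fun h => h.2 hnm).symm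
    · simpa [modifySeq, hnm] using hβ n hnD

theorem branches_union_inter_eq_empty {D E : Set ℕ} {δ : ∀ i, X i} {m : ℕ}
    {Y : Set (∀ i, X i)} (hE : E ⊆ Iio m)
    (h : branches X D δ ∩ ⋃ s, modifySeq X m s ⁻¹' Y = ∅) :
    branches X (D ∪ E) δ ∩ Y = ∅ := by
  refine eq_empty_of_forall_notMem fun β ⟨hβ, hβY⟩ => ?_
  -- resetting the prefix of `β` to that of `δ` lands in `[T[D, δ]]`, and restoring it gives back `β`
  have hmem : modifySeq X m δ β ∈ branches X D δ ∩ ⋃ s, modifySeq X m s ⁻¹' Y := by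
    refine ⟨fun n hnD => ?_, mem_iUnion.2 ⟨β, ?_⟩⟩
    · by_cases hnm : n < m
      · simp [modifySeq, hnm]
      · simpa [modifySeq, hnm] using hβ n fun h => h.elim hnD fun hE' => hnm (hE hE')
    · show modifySeq X m β (modifySeq X m δ β) ∈ Y
      convert hβY using 1
      funext n
      by_cases hnm : n < m <;> simp [modifySeq, hnm]
  exact h.subset hmem

end Branches

section Additivity

variable {X : ℕ → Type}

theorem aleph0_le_addd0 (h : addd0 X ≠ 0) : ℵ₀ ≤ addd0 X := by
  rw [addd0] at h ⊢
  refine le_csInf (Set.nonempty_iff_ne_empty.2 fun he => h (by rw [he, Cardinal.sInf_empty])) ?_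
  rintro _ ⟨G, hGd0, hGU, rfl⟩
  by_contra hlt
  exact hGU (sUnion_mem_d0_of_finite (lt_aleph0_iff_set_finite.1 (not_le.1 hlt)) hGd0)

theorem sUnion_mem_d0_of_mk_lt {G : Set (Set (∀ i, X i))} (hG : G ⊆ d0 (treeV X))
    (hlt : #G < addd0 X) : ⋃₀ G ∈ d0 (treeV X) := by
  rw [addd0] at hlt
  by_contra hGU
  exact hlt.not_ge <| csInf_le' ⟨G, hG, hGU, rfl⟩

theorem iUnion_modifySeq_preimage_mem_d0 [∀ i, Nontrivial (X i)] (hadd : ∀ i, #(X i) < addd0 X)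
    (m : ℕ) {Y : Set (∀ i, X i)} (hY : Y ∈ d0 (treeV X)) :
    ⋃ s, modifySeq X m s ⁻¹' Y ∈ d0 (treeV X) := by
  set f : (∀ i, X i) → Set (∀ i, X i) := fun s => modifySeq X m s ⁻¹' Y
  set restrict : (∀ i, X i) → ∀ i : Fin m, X i := fun s i => s i
  have hf : f.FactorsThrough restrict := fun s t hst => by
    have : modifySeq X m s = modifySeq X m t := by
      funext β n
      by_cases hnm : n < m
      · simpa [modifySeq, hnm] using congrFun hst ⟨n, hnm⟩
      · simp [modifySeq, hnm]
    simp only [f, this]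
  have hcard : #(range f) < addd0 X := calc
    #(range f) ≤ #(range (Function.extend restrict f fun _ => ∅)) :=
      mk_le_mk_of_subset <| range_subset_iff.2 fun s => ⟨restrict s, hf.extend_apply (fun _ => ∅) s⟩
    _ ≤ #(∀ i : Fin m, X i) := mk_range_le
    _ < addd0 X := mk_pi_fin_lt (aleph0_le_addd0 (hadd 0).ne_bot) _ fun i => hadd i
  rw [← sUnion_range]
  exact sUnion_mem_d0_of_mk_lt (range_subset_iff.2 fun s => modifySeq_preimage_mem_d0 m s hY) hcard

end Additivity

theorem stmt8 (X : ℕ → Type) [∀ i, Nontrivial (X i)]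
    (hadd : ∀ i, #(X i) < addd0 X)
    (k : ℕ) (A : Set ℕ) (hA : A.Infinite) (α : ∀ i, X i)
    (Y : Set (∀ i, X i)) (hY : Y ∈ d0 (treeV X)) :
    ∃ (B : Set ℕ) (β : ∀ i, X i), B.Infinite ∧
      branches X B β ⊆ branches X A α ∧
      branches X B β ∩ Y = ∅ ∧
      ∀ j ≤ k, Nat.nth (· ∈ B) j = Nat.nth (· ∈ A) j := by
  classical
  set m := Nat.nth (· ∈ A) k + 1
  obtain ⟨_, ⟨D, δ, hD, rfl⟩, hsub, hdisj⟩ := iUnion_modifySeq_preimage_mem_d0 hadd m hY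
    (branches X (A \ Iio m) α) ⟨_, _, hA.sdiff (finite_Iio m), rfl⟩
  obtain ⟨hDA, hδα⟩ := branches_subset_branches_iff.1 hsub
  have hagree : ∀ n < m, n ∈ A ↔ n ∈ D ∪ (A ∩ Iio m) := fun n hn =>
    ⟨fun h => Or.inr ⟨h, hn⟩, fun h => h.elim (fun h => (hDA h).1) (·.1)⟩
  refine ⟨D ∪ (A ∩ Iio m), δ, hD.mono subset_union_left,
    branches_subset_branches_iff.2 ⟨union_subset (hDA.trans sdiff_subset) inter_subset_left,
      fun n hn => hδα n fun h => hn h.1⟩,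
    branches_union_inter_eq_empty inter_subset_right hdisj, fun j hj => ?_⟩
  exact Nat.nth_eq_nth_of_forall_lt hA hagree <|
    ((Nat.nth_le_nth hA).2 hj).trans_lt (Nat.lt_succ_self _)
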